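/- Let λ be an uncountable regular cardinal, S a subset of { x < λ : cf(x) = ω } that is stationary in λ, and α a countable ordinal. Then S has a subset order-homeomorphic to α. -/

import Mathlib

open Set Ordinal
open scoped Cardinal

noncomputable section

namespace Ordinal

/-- Natural (Hessenberg) addition, as formerly defined in Mathlib. -/
def nadd : Ordinal.{0} → Ordinal.{0} → Ordinal.{0}
  | a, b =>
    max (blsub.{0, 0} a fun a' _ => nadd a' b) (blsub.{0, 0} b fun b' _ => nadd a b')
termination_by a b => (a, b)

end Ordinal

infixl:65 " ♯ " => Ordinal.nadd

/-- Derived set (non-isolated points) of a set of ordinals, as a subspace. -/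
def deriv' (s : Set Ordinal.{0}) : Set Ordinal.{0} := {x ∈ s | x ∈ closure (s \ {x})}

/-- Iterated Cantor–Bendixson derivative. -/
def iterDeriv (s : Set Ordinal.{0}) (o : Ordinal.{0}) : Set Ordinal.{0} :=
  Ordinal.limitRecOn o s (fun _ ih => deriv' ih) (fun o _ ih => ⋂ (p : Ordinal.{0}) (h : p < o), ih p h)

/-- `s` contains a homeomorphic copy of the ordinal `α` (with its order topology). -/
def HomeoCopy (α : Ordinal.{0}) (s : Set Ordinal.{0}) : Prop :=
  ∃ t : Set Ordinal, t ⊆ s ∧ Nonempty ((Iio α : Set Ordinal.{0}) ≃ₜ t)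

/-- Two ordinals are biembeddable: each is homeomorphic to a subspace of the other. -/
def Biembed (α β : Ordinal.{0}) : Prop := HomeoCopy α (Iio β) ∧ HomeoCopy β (Iio α)

/-- Two sets of ordinals are order-homeomorphic: there is an order-preserving homeomorphism. -/
def OrderHomeo (X Y : Set Ordinal.{0}) : Prop :=
  ∃ e : X ≃ₜ Y, ∀ a b : X, a ≤ b ↔ e a ≤ e b

/-- An ordinal is order-reinforcing. -/
def OrderReinforcing (α : Ordinal.{0}) : Prop :=
  ∀ X : Set Ordinal, Nonempty ((Iio α : Set Ordinal.{0}) ≃ₜ X) → ∃ Y ⊆ X, OrderHomeo (Iio α) Y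

/-- The Cantor–Bendixson rank of an ordinal: the least exponent in its Cantor normal form. -/
def CB (x : Ordinal.{0}) : Ordinal := if x = 0 then 0 else sSup {γ | (ω : Ordinal.{0}) ^ γ ∣ x}

/-- The natural (Hessenberg) sum of a finite family of ordinals. -/
def natSumFam {k : ℕ} (α : Fin k → Ordinal.{0}) : Ordinal := (List.ofFn α).foldr (· ♯ ·) 0

/-- The Milner–Rado sum of a finite family of ordinals. -/
def mrSumFam {k : ℕ} (α : Fin k → Ordinal.{0}) : Ordinal :=
  sInf {δ | ∀ β : Fin k → Ordinal, (∀ i, β i < α i) → δ ≠ natSumFam β}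

/-- The topological pigeonhole relation `β → (top α i)¹` for finitely many colours. -/
def TopPH {k : ℕ} (β : Ordinal.{0}) (α : Fin k → Ordinal.{0}) : Prop :=
  ∀ c : Ordinal → Fin k, ∃ i, HomeoCopy (α i) (Iio β ∩ c ⁻¹' {i})

/-- The topological pigeonhole relation with an arbitrary index type of colours. -/
def TopPHFam {ι : Type*} (β : Ordinal.{0}) (α : ι → Ordinal.{0}) : Prop :=
  ∀ c : Ordinal → ι, ∃ i, HomeoCopy (α i) (Iio β ∩ c ⁻¹' {i})

/-- `ω̄[γ, m]`: `ω ^ γ * m + 1` if `γ > 0`, and `m` if `γ = 0`. -/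
def obar (γ : Ordinal.{0}) (m : ℕ) : Ordinal := if γ = 0 then (m : Ordinal.{0}) else ω ^ γ * m + 1

/-- `C` is closed and unbounded in `o`. -/
def IsClubIn (C : Set Ordinal.{0}) (o : Ordinal.{0}) : Prop :=
  C ⊆ Iio o ∧ (∀ x < o, ∃ y ∈ C, x ≤ y) ∧
    ∀ x < o, x ≠ 0 → (∀ y < x, ∃ z ∈ C, y < z ∧ z < x) → x ∈ C

/-- `S` is stationary in `o`: it meets every club subset of `o`. -/
def StationaryIn (S : Set Ordinal.{0}) (o : Ordinal.{0}) : Prop :=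
  ∀ C, IsClubIn C o → (S ∩ C).Nonempty

/-!
For `a ≤ b < ω₁` let `copyTops S a b` consist of the `γ ∈ S` that, above any given `β < γ`, are
the image of `b` under a normal map of `[a, b]` into `S`. Induction on `b` shows that these sets
are stationary below `κ`; since `cf κ > ω`, clubs below `κ` are closed under countable
intersections, so one can pass to common accumulation points of countably many of them.
At `b = succ c`, a `γ ∈ S` that is a limit of `copyTops S a c` lies in `copyTops S a b`: extend a
copy of `[a, c]` with top below `γ` by `b ↦ γ`. At a limit `b`, split `[a, b)` into `ω`
consecutive closed blocks; a `γ ∈ S` that is a limit of tops of copies of every block lies in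
`copyTops S a b`: as `cf γ = ω`, copies of successive blocks can be chained with tops cofinal in
`γ`, which makes the glued map continuous at `b`. Finally, a normal map of `[0, α]` restricts to
an order-homeomorphism of `[0, α)` onto its image.
-/

open Order Topology Filter Cardinal
open scoped Set.Notation

theorem Set.Iio.isSuccLimit_coe {J : Type*} [LinearOrder J] {j : J} {x : Iio j}
    (hx : IsSuccLimit x) : IsSuccLimit (x : J) :=
  ⟨fun h => hx.not_isMin fun _ hy => h hy,
    fun b hb => hx.2 ⟨b, hb.1.trans x.2⟩ ⟨hb.1, fun _ hby hyx => hb.2 hby hyx⟩⟩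

theorem Order.IsNormal.orderHomeo_range {α : Ordinal.{0}} {g : Iio α → Ordinal.{0}}
    (hg : IsNormal g) : OrderHomeo (Iio α) (range g) := by
  let e := hg.strictMono.orderIso g
  have hlt (a : Iio α) (y : range g) : e a < y ↔ g a < y := Subtype.coe_lt_coe.symm
  have hgt (a : Iio α) (y : range g) : y < e a ↔ y < g a := Subtype.coe_lt_coe.symm
  have hsymm : Continuous e.symm := by
    refine OrderTopology.continuous_iff.2 fun a => ⟨?_, ?_⟩
    · have : e.symm ⁻¹' Ioi a = Subtype.val ⁻¹' Ioi (g a) := by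
        ext y; simp [← hlt]
      exact this ▸ isOpen_Ioi.preimage continuous_subtype_val
    · have : e.symm ⁻¹' Iio a = Subtype.val ⁻¹' Iio (g a) := by
        ext y; simp [← hgt]
      exact this ▸ isOpen_Iio.preimage continuous_subtype_val
  exact ⟨⟨e.toEquiv, hg.continuous.subtype_mk _, hsymm⟩, fun a b => e.le_iff_le.symm⟩

section Club
variable {α : Type*} [LinearOrder α] {s t : Set α}

theorem isClub_Ici (x : α) : IsClub (Ici x) :=
  ⟨fun _ hd ⟨_, hz⟩ _ _ ha => (hd hz).trans (ha.1 hz),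
    fun y => ⟨max x y, le_max_left .., le_max_right ..⟩⟩

theorem IsStationary.isCofinal (hs : IsStationary s) : IsCofinal s := fun x =>
  let ⟨y, hy, hxy⟩ := hs (isClub_Ici x)
  ⟨y, hy, hxy⟩

theorem IsStationary.inter_isClub [WellFoundedLT α] (hα : Order.cof α ≠ ℵ₀)
    (hs : IsStationary s) (ht : IsClub t) : IsStationary (s ∩ t) := fun u hu => by
  simpa only [inter_assoc] using hs (ht.inter hα hu)

end Club

section StationaryIn
variable {o : Ordinal.{0}}

theorem isClubIn_image_val {t : Set (Iio o)} (ht : IsClub t) : IsClubIn (Subtype.val '' t) o := by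
  refine ⟨image_subset_iff.2 fun x _ => x.2, fun x hx => ?_, fun x hxo hx0 hx => ?_⟩
  · obtain ⟨y, hy, hxy⟩ := ht.isCofinal ⟨x, hx⟩
    exact ⟨y, mem_image_of_mem _ hy, hxy⟩
  · refine ⟨⟨x, hxo⟩, ht.isLUB_mem (t := {z ∈ t | z.1 < x}) (fun z hz => hz.1) ?_
      ⟨fun z hz => hz.2.le, fun u hu => not_lt.1 fun hux => ?_⟩, rfl⟩
    · obtain ⟨_, ⟨z, hz, rfl⟩, -, hzx⟩ := hx 0 (pos_iff_ne_zero.2 hx0)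
      exact ⟨z, hz, hzx⟩
    · obtain ⟨_, ⟨z, hz, rfl⟩, huz, hzx⟩ := hx u hux
      exact (hu ⟨hz, hzx⟩).not_gt huz

theorem StationaryIn.isStationary {S : Set Ordinal.{0}} (h : StationaryIn S o) :
    IsStationary (Iio o ↓∩ S) := fun t ht => by
  obtain ⟨_, hxS, x, hx, rfl⟩ := h _ (isClubIn_image_val ht)
  exact ⟨x, hxS, hx⟩

end StationaryIn

namespace Ordinal
variable {o : Ordinal.{0}}

theorem aleph0_lt_cof_Iio (h : ℵ₀ < o.cof) : ℵ₀ < Order.cof (Iio o) := by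
  simpa [← lift_cof] using h

theorem dirSupClosed_setOf_accPt (T : Set Ordinal.{0}) :
    DirSupClosed {x : Iio o | AccPt x.1 (𝓟 T)} := by
  intro d hd ⟨z, hz⟩ _ x hx
  by_cases hxd : x ∈ d
  · exact hd hxd
  have hlt {z} (hz : z ∈ d) : z < x := (hx.1 hz).lt_of_ne fun h => hxd (h ▸ hz)
  refine SuccOrder.accPt_principal.2 ⟨not_isMin_iff.2 ⟨z, hlt hz⟩, fun y hy => ?_⟩
  obtain ⟨u, hu, hyu⟩ := (lt_isLUB_iff hx).1 (show ⟨y, hy.trans x.2⟩ < x from hy)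
  exact ((SuccOrder.accPt_principal.1 (hd hu)).2 y hyu).mono
    (inter_subset_inter_right _ (Ioo_subset_Ioo_right (hlt hu).le))

theorem isCofinal_setOf_accPt (hcof : ℵ₀ < o.cof) {T : Set Ordinal.{0}}
    (hT : IsCofinal (Iio o ↓∩ T)) : IsCofinal {x : Iio o | AccPt x.1 (𝓟 T)} := by
  have ho : IsSuccLimit o := one_lt_cof_iff.1 (one_lt_aleph0.trans hcof)
  have hnext (y : Iio o) : ∃ z : Iio o, z.1 ∈ T ∧ y < z := by
    obtain ⟨z, hz, hyz⟩ := hT ⟨succ y, ho.succ_lt y.2⟩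
    exact ⟨z, hz, (lt_succ y.1).trans_le hyz⟩
  choose next hnextT hlt using hnext
  intro x
  let u (n : ℕ) : Iio o := next^[n] x
  have hu : StrictMono u := strictMono_nat_of_lt_succ fun n => by
    simpa only [u, Function.iterate_succ_apply'] using hlt _
  have hbdd : BddAbove (range fun n => (u n).1) := bddAbove_of_small
  have hw : ⨆ n, (u n).1 < o := iSup_lt_of_lt_cof (by simpa using hcof) fun n => (u n).2
  have hlt_w (n : ℕ) : (u n).1 < ⨆ n, (u n).1 :=
    (Subtype.coe_lt_coe.2 (hu n.lt_succ_self)).trans_le (le_ciSup hbdd _)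
  refine ⟨⟨_, hw⟩, SuccOrder.accPt_principal.2 ⟨not_isMin_iff.2 ⟨_, hlt_w 0⟩, fun y hy => ?_⟩,
    le_ciSup hbdd 0⟩
  obtain ⟨n, hn⟩ := (lt_ciSup_iff hbdd).1 hy
  refine ⟨u (n + 1), ?_, hn.trans (hu n.lt_succ_self), hlt_w _⟩
  simpa only [u, Function.iterate_succ_apply'] using hnextT _

theorem isClub_setOf_accPt (hcof : ℵ₀ < o.cof) {T : Set Ordinal.{0}}
    (hT : IsCofinal (Iio o ↓∩ T)) : IsClub {x : Iio o | AccPt x.1 (𝓟 T)} :=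
  ⟨dirSupClosed_setOf_accPt T, isCofinal_setOf_accPt hcof hT⟩

theorem exists_nat_cofinal_of_cof_eq_aleph0 {x : Ordinal.{0}} (hx : x.cof = ℵ₀) :
    ∃ t : ℕ → Ordinal.{0}, (∀ n, t n < x) ∧ ∀ y < x, ∃ n, y ≤ t n := by
  obtain ⟨s, hs, hcard⟩ := Order.exists_cof_eq (Iio x)
  have hcount : s.Countable := by
    rw [← le_aleph0_iff_set_countable, hcard, cof_Iio, ← lift_cof, hx]
    simp
  have : Nonempty (Iio x) :=
    ⟨⟨0, pos_iff_ne_zero.2 fun h : x = 0 => aleph0_ne_zero (by rw [← hx, h, cof_zero])⟩⟩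
  obtain ⟨t, rfl⟩ := hcount.exists_eq_range hs.nonempty
  refine ⟨fun n => (t n).1, fun n => (t n).2, fun y hy => ?_⟩
  obtain ⟨_, ⟨n, rfl⟩, hn⟩ := hs ⟨y, hy⟩
  exact ⟨n, hn⟩

/-- `f` is a normal embedding of `[a, b]` into `S`; the last field is continuity at limits. -/
structure IsNormalCopy (S : Set Ordinal.{0}) (a b : Ordinal.{0}) (f : Ordinal.{0} → Ordinal.{0}) :
    Prop where
  strictMonoOn : StrictMonoOn f (Icc a b)
  mapsTo : MapsTo f (Icc a b) S
  exists_lt_of_isSuccLimit : ∀ ζ ∈ Ioc a b, IsSuccLimit ζ → ∀ y < f ζ, ∃ η ∈ Ico a ζ, y < f η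

def copyTops (S : Set Ordinal.{0}) (a b : Ordinal.{0}) : Set Ordinal.{0} :=
  {γ ∈ S | ∀ β < γ, ∃ f, IsNormalCopy S a b f ∧ β < f a ∧ f b = γ}

namespace IsNormalCopy
variable {S : Set Ordinal.{0}} {a b c γ η : Ordinal.{0}} {f : Ordinal.{0} → Ordinal.{0}}

theorem const (hγ : γ ∈ S) : IsNormalCopy S a a fun _ => γ where
  strictMonoOn := by simp
  mapsTo _ _ := hγ
  exists_lt_of_isSuccLimit _ hζ := absurd (hζ.1.trans_le hζ.2) (lt_irrefl _)

theorem apply_le_apply_right (hf : IsNormalCopy S a b f) (hη : η ∈ Icc a b) : f η ≤ f b :=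
  hf.strictMonoOn.monotoneOn hη ⟨hη.1.trans hη.2, le_rfl⟩ hη.2

theorem update_succ (hf : IsNormalCopy S a c f) (hγ : γ ∈ S) (hlt : f c < γ) :
    IsNormalCopy S a (succ c) (Function.update f (succ c) γ) := by
  have hfc {η} (hη : η ∈ Icc a c) : Function.update f (succ c) γ η = f η :=
    Function.update_of_ne (hη.2.trans_lt (lt_succ c)).ne _ _
  have hIcc {η} (hη : η ∈ Icc a (succ c)) (hne : η ≠ succ c) : η ∈ Icc a c :=
    ⟨hη.1, lt_succ_iff.1 (hη.2.lt_of_ne hne)⟩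
  refine ⟨fun x hx y hy hxy => ?_, fun η hη => ?_, fun ζ hζ hlim y hy => ?_⟩
  · have hx' := hIcc hx (hxy.trans_le hy.2).ne
    rw [hfc hx']
    obtain rfl | hne := eq_or_ne y (succ c)
    · simpa using (hf.apply_le_apply_right hx').trans_lt hlt
    · rw [hfc (hIcc hy hne)]
      exact hf.strictMonoOn hx' (hIcc hy hne) hxy
  · obtain rfl | hne := eq_or_ne η (succ c)
    · simpa using hγ
    · rw [hfc (hIcc hη hne)]
      exact hf.mapsTo (hIcc hη hne)
  · have hζ' : ζ ∈ Ioc a c :=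
      ⟨hζ.1, (hIcc (Ioc_subset_Icc_self hζ) (hlim.succ_ne c).symm).2⟩
    rw [hfc (Ioc_subset_Icc_self hζ')] at hy
    obtain ⟨η, hη, hyη⟩ := hf.exists_lt_of_isSuccLimit ζ hζ' hlim y hy
    exact ⟨η, hη, (hfc ⟨hη.1, hη.2.le.trans hζ'.2⟩).symm ▸ hyη⟩

theorem isNormal_restrict {α : Ordinal.{0}} (hf : IsNormalCopy S 0 α f) :
    IsNormal fun x : Iio α => f x := by
  refine isNormal_iff.2 ⟨fun x y hxy => hf.strictMonoOn ⟨zero_le, x.2.le⟩ ⟨zero_le, y.2.le⟩ hxy,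
    fun ζ hζ y hy => not_lt.1 fun hlt => ?_⟩
  have hζ' := Set.Iio.isSuccLimit_coe hζ
  obtain ⟨η, hη, hyη⟩ := hf.exists_lt_of_isSuccLimit ζ ⟨hζ'.pos, ζ.2.le⟩ hζ' y hlt
  exact (hy ⟨η, hη.2.trans ζ.2⟩ hη.2).not_gt hyη

end IsNormalCopy

/-- `[a, b)` is the union of the consecutive closed blocks `[s n, c n]`. -/
structure IsBlockDecomp (a b : Ordinal.{0}) (s c : ℕ → Ordinal.{0}) : Prop where
  start_zero : s 0 = a
  start_le_end : ∀ n, s n ≤ c n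
  start_succ : ∀ n, s (n + 1) = succ (c n)
  end_lt : ∀ n, c n < b
  exists_le_end : ∀ y < b, ∃ n, y ≤ c n

theorem exists_isBlockDecomp {a b : Ordinal.{0}} (hb : IsSuccLimit b) (hcof : b.cof = ℵ₀)
    (hab : a < b) : ∃ s c, IsBlockDecomp a b s c := by
  obtain ⟨t, htb, ht⟩ := exists_nat_cofinal_of_cof_eq_aleph0 hcof
  let s (n : ℕ) : Ordinal.{0} := Nat.rec a (fun n x => succ (max x (t n))) n
  have hsb (n : ℕ) : s n < b := by
    induction n with
    | zero => exact hab
    | succ n ih => exact hb.succ_lt (max_lt ih (htb n))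
  refine ⟨s, fun n => max (s n) (t n), ⟨rfl, fun n => le_max_left .., fun n => rfl,
    fun n => max_lt (hsb n) (htb n), fun y hy => ?_⟩⟩
  obtain ⟨n, hn⟩ := ht y hy
  exact ⟨n, hn.trans (le_max_right ..)⟩

open Classical in
/-- On a block decomposition of `[a, b)` with block ends `c`, this is `f n` on the `n`-th block and
`γ` from `b` on. -/
def glueBlocks (c : ℕ → Ordinal.{0}) (f : ℕ → Ordinal.{0} → Ordinal.{0}) (γ η : Ordinal.{0}) :
    Ordinal.{0} :=
  if h : ∃ n, η ≤ c n then f (Nat.find h) η else γ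

namespace IsBlockDecomp
variable {a b : Ordinal.{0}} {s c : ℕ → Ordinal.{0}} (hd : IsBlockDecomp a b s c)
include hd

theorem end_strictMono : StrictMono c :=
  strictMono_nat_of_lt_succ fun n =>
    (lt_succ (c n)).trans_le (hd.start_succ n ▸ hd.start_le_end _)

theorem end_lt_start {m n : ℕ} (h : m < n) : c m < s n := by
  obtain ⟨k, rfl⟩ := Nat.exists_eq_add_of_lt h
  rw [hd.start_succ]
  exact (hd.end_strictMono.monotone (Nat.le_add_right m k)).trans_lt (lt_succ _)

theorem le_start (n : ℕ) : a ≤ s n := by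
  cases n with
  | zero => exact hd.start_zero.ge
  | succ n => exact (hd.start_zero ▸ hd.start_le_end 0).trans (hd.end_lt_start n.succ_pos).le

theorem exists_block {η : Ordinal.{0}} (ha : a ≤ η) (hb : η < b) :
    ∃ n, η ∈ Icc (s n) (c n) := by
  have h := hd.exists_le_end η hb
  refine ⟨Nat.find h, ?_, Nat.find_spec h⟩
  cases hn : Nat.find h with
  | zero => exact hd.start_zero ▸ ha
  | succ n =>
    exact hd.start_succ n ▸ succ_le_of_lt (not_le.1 (Nat.find_min h (hn ▸ n.lt_succ_self)))

theorem glueBlocks_eq {f : ℕ → Ordinal.{0} → Ordinal.{0}} {γ η : Ordinal.{0}} {n : ℕ}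
    (h₁ : s n ≤ η) (h₂ : η ≤ c n) :
    glueBlocks c f γ η = f n η := by
  have h : ∃ n, η ≤ c n := ⟨n, h₂⟩
  have hfind : Nat.find h = n := le_antisymm (Nat.find_min' h h₂) (not_lt.1 fun hlt =>
    (hd.end_lt_start hlt).not_ge (h₁.trans (Nat.find_spec h)))
  rw [glueBlocks, dif_pos h, hfind]

theorem glueBlocks_right (f : ℕ → Ordinal.{0} → Ordinal.{0}) (γ : Ordinal.{0}) :
    glueBlocks c f γ b = γ :=
  dif_neg fun ⟨n, hn⟩ => (hd.end_lt n).not_ge hn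

theorem start_ne {ζ : Ordinal.{0}} (hζ : IsSuccLimit ζ) (ha : a < ζ) (n : ℕ) : s n ≠ ζ := by
  cases n with
  | zero => exact hd.start_zero ▸ ha.ne
  | succ n => exact hd.start_succ n ▸ hζ.succ_ne _

variable {S : Set Ordinal.{0}} {f : ℕ → Ordinal.{0} → Ordinal.{0}} {γ : Ordinal.{0}}

theorem apply_end_lt_apply_start (hf : ∀ n, IsNormalCopy S (s n) (c n) (f n))
    (hchain : ∀ n, f n (c n) < f (n + 1) (s (n + 1))) {m n : ℕ} (h : m < n) :
    f m (c m) < f n (s n) := by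
  induction n, h using Nat.le_induction with
  | base => exact hchain m
  | succ n _ ih =>
    exact (ih.trans_le ((hf n).apply_le_apply_right ⟨le_rfl, hd.start_le_end n⟩)).trans
      (hchain n)

theorem exists_glueBlocks_eq {η : Ordinal.{0}} (hη : η ∈ Icc a b) (hηb : η < b) :
    ∃ n, η ∈ Icc (s n) (c n) ∧ glueBlocks c f γ η = f n η := by
  obtain ⟨n, hn⟩ := hd.exists_block hη.1 hηb
  exact ⟨n, hn, hd.glueBlocks_eq hn.1 hn.2⟩

theorem strictMonoOn_glueBlocks (hf : ∀ n, IsNormalCopy S (s n) (c n) (f n))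
    (hchain : ∀ n, f n (c n) < f (n + 1) (s (n + 1))) (hγ : ∀ n, f n (c n) < γ) :
    StrictMonoOn (glueBlocks c f γ) (Icc a b) := by
  intro x hx y hy hxy
  obtain ⟨m, hxm, hx⟩ := hd.exists_glueBlocks_eq hx (hxy.trans_le hy.2)
  rw [hx]
  rcases hy.2.lt_or_eq with hyb | rfl
  · obtain ⟨n, hyn, hy⟩ := hd.exists_glueBlocks_eq hy hyb
    rw [hy]
    rcases lt_trichotomy m n with hmn | rfl | hnm
    · calc f m x ≤ f m (c m) := (hf m).apply_le_apply_right hxm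
        _ < f n (s n) := hd.apply_end_lt_apply_start hf hchain hmn
        _ ≤ f n y := (hf n).strictMonoOn.monotoneOn ⟨le_rfl, hd.start_le_end n⟩ hyn hyn.1
    · exact (hf m).strictMonoOn hxm hyn hxy
    · exact absurd hxy (not_lt.2 ((hyn.2.trans (hd.end_lt_start hnm).le).trans hxm.1))
  · rw [hd.glueBlocks_right]
    exact ((hf m).apply_le_apply_right hxm).trans_lt (hγ m)

theorem isNormalCopy_glueBlocks (hf : ∀ n, IsNormalCopy S (s n) (c n) (f n))
    (hchain : ∀ n, f n (c n) < f (n + 1) (s (n + 1))) (hγS : γ ∈ S) (hγ : ∀ n, f n (c n) < γ)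
    (hγ' : ∀ y < γ, ∃ n, y < f n (c n)) : IsNormalCopy S a b (glueBlocks c f γ) := by
  refine ⟨hd.strictMonoOn_glueBlocks hf hchain hγ, fun η hη => ?_, fun ζ hζ hlim y hy => ?_⟩
  · rcases hη.2.lt_or_eq with hηb | rfl
    · obtain ⟨n, hηn, hη⟩ := hd.exists_glueBlocks_eq hη hηb
      exact hη ▸ (hf n).mapsTo hηn
    · exact (hd.glueBlocks_right f γ).symm ▸ hγS
  · rcases hζ.2.lt_or_eq with hζb | rfl
    · obtain ⟨n, hζn, hζ'⟩ := hd.exists_glueBlocks_eq (Ioc_subset_Icc_self hζ) hζb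
      rw [hζ'] at hy
      obtain ⟨η, hη, hyη⟩ := (hf n).exists_lt_of_isSuccLimit ζ
        ⟨hζn.1.lt_of_ne (hd.start_ne hlim hζ.1 n), hζn.2⟩ hlim y hy
      refine ⟨η, ⟨(hd.le_start n).trans hη.1, hη.2⟩, ?_⟩
      rwa [hd.glueBlocks_eq hη.1 (hη.2.le.trans hζn.2)]
    · rw [hd.glueBlocks_right] at hy
      obtain ⟨n, hn⟩ := hγ' y hy
      refine ⟨c n, ⟨(hd.le_start n).trans (hd.start_le_end n), hd.end_lt n⟩, ?_⟩
      rwa [hd.glueBlocks_eq (hd.start_le_end n) le_rfl]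

end IsBlockDecomp

section copyTops
variable {S : Set Ordinal.{0}} {a b c γ : Ordinal.{0}}

theorem subset_copyTops_self : S ⊆ copyTops S a a := fun γ hγ =>
  ⟨hγ, fun _ hβ => ⟨fun _ => γ, .const hγ, hβ, rfl⟩⟩

theorem mem_copyTops_succ (hac : a ≤ c) (hγS : γ ∈ S) (hγ : AccPt γ (𝓟 (copyTops S a c))) :
    γ ∈ copyTops S a (succ c) := by
  refine ⟨hγS, fun β hβ => ?_⟩
  obtain ⟨z, hz, hβz, hzγ⟩ := (SuccOrder.accPt_principal.1 hγ).2 β hβ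
  obtain ⟨f, hf, hβf, rfl⟩ := hz.2 β hβz
  refine ⟨_, hf.update_succ hγS hzγ, ?_, Function.update_self ..⟩
  rwa [Function.update_of_ne (hac.trans_lt (lt_succ c)).ne]

theorem IsBlockDecomp.mem_copyTops {s c : ℕ → Ordinal.{0}} (hd : IsBlockDecomp a b s c)
    (hγS : γ ∈ S) (hγ : γ.cof = ℵ₀) (hacc : ∀ n, AccPt γ (𝓟 (copyTops S (s n) (c n)))) :
    γ ∈ copyTops S a b := by
  refine ⟨hγS, fun β hβ => ?_⟩
  obtain ⟨g, hgγ, hg⟩ := exists_nat_cofinal_of_cof_eq_aleph0 hγ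
  have hstep (n : ℕ) (p : Iio γ) : ∃ f, IsNormalCopy S (s n) (c n) f ∧ p.1 < f (s n) ∧
      g n < f (c n) ∧ f (c n) < γ := by
    obtain ⟨z, hz, hpz, hzγ⟩ :=
      (SuccOrder.accPt_principal.1 (hacc n)).2 (max p (g n)) (max_lt p.2 (hgγ n))
    obtain ⟨f, hf, hpf, rfl⟩ := hz.2 _ hpz
    exact ⟨f, hf, (le_max_left ..).trans_lt hpf, (le_max_right ..).trans_lt hpz, hzγ⟩
  choose F hF using hstep
  -- `top n` is the top of the copy of the previous block; the copy of block `n` starts above it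
  -- and ends above `g n`, so the glued map is continuous at `b`.
  let top (n : ℕ) : Iio γ := Nat.rec ⟨β, hβ⟩ (fun n p => ⟨F n p (c n), (hF n p).2.2.2⟩) n
  refine ⟨glueBlocks c (fun n => F n (top n)) γ, hd.isNormalCopy_glueBlocks (fun n => (hF n _).1)
    (fun n => (hF (n + 1) (top (n + 1))).2.1) hγS (fun n => (hF n _).2.2.2) fun y hy => ?_, ?_,
    hd.glueBlocks_right _ _⟩
  · obtain ⟨n, hn⟩ := hg y hy
    exact ⟨n, hn.trans_lt (hF n _).2.2.1⟩
  · rw [← hd.start_zero, hd.glueBlocks_eq le_rfl (hd.start_le_end 0)]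
    exact (hF 0 _).2.1

theorem isStationary_copyTops {o : Ordinal.{0}} (hcof : ℵ₀ < o.cof) (hS : ∀ x ∈ S, x.cof = ℵ₀)
    (hstat : IsStationary (Iio o ↓∩ S)) (hb : b < ω₁) (hab : a ≤ b) :
    IsStationary (Iio o ↓∩ copyTops S a b) := by
  have hcof' : Order.cof (Iio o) ≠ ℵ₀ := (aleph0_lt_cof_Iio hcof).ne'
  induction b using WellFoundedLT.induction generalizing a with | _ b IH =>
  rcases hab.eq_or_lt with rfl | hab
  · exact hstat.mono (preimage_mono subset_copyTops_self)
  rcases zero_or_succ_or_isSuccLimit b with rfl | ⟨c, rfl⟩ | hlim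
  · exact (not_lt_zero hab).elim
  · have hac := lt_succ_iff.1 hab
    have hT := IH c (lt_succ c) ((lt_succ c).trans hb) hac
    refine (hstat.inter_isClub hcof' (isClub_setOf_accPt hcof hT.isCofinal)).mono ?_
    rintro γ ⟨hγS, hγ⟩
    exact mem_copyTops_succ hac hγS hγ
  · obtain ⟨s, c, hd⟩ := exists_isBlockDecomp hlim (cof_eq_aleph0_of_isSuccLimit hlim hb) hab
    have hT (n : ℕ) := IH (c n) (hd.end_lt n) ((hd.end_lt n).trans hb) (hd.start_le_end n)
    refine (hstat.inter_isClub hcof' (IsClub.iInter_of_countable hcof' fun n =>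
      isClub_setOf_accPt hcof (hT n).isCofinal)).mono ?_
    rintro γ ⟨hγS, hγ⟩
    exact hd.mem_copyTops hγS (hS _ hγS) (mem_iInter.1 hγ)

end copyTops

end Ordinal

/-- Friedman's theorem, generalized: a stationary subset of the points of countable
cofinality below a regular uncountable cardinal contains an order-homeomorphic copy of
every countable ordinal. -/
theorem stationary_orderHomeo_copy (κ : Cardinal.{0}) (hreg : κ.IsRegular) (hunc : ℵ₀ < κ)
    (S : Set Ordinal.{0}) (hSsub : S ⊆ {x : Ordinal.{0} | x < κ.ord ∧ x.cof = ℵ₀})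
    (hstat : StationaryIn S κ.ord) (α : Ordinal.{0}) (hα : α < ω₁) :
    ∃ Y ⊆ S, OrderHomeo (Iio α) Y := by
  have hcof : ℵ₀ < κ.ord.cof := by rwa [hreg.cof_ord]
  have hcopies := Ordinal.isStationary_copyTops hcof (fun x hx => (hSsub hx).2)
    hstat.isStationary hα (zero_le (a := α))
  obtain ⟨⟨γ, _⟩, hγS, hγ⟩ := hcopies.nonempty
  obtain ⟨f, hf, -, -⟩ := hγ 0 (Ordinal.cof_pos.1 ((hSsub hγS).2 ▸ aleph0_pos))
  exact ⟨_, range_subset_iff.2 fun x => hf.mapsTo ⟨zero_le, x.2.le⟩,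
    hf.isNormal_restrict.orderHomeo_range⟩

end
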